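/- arXiv:2206.08134 — 3 statements merged into one kernel-verified Lean document; each statement's English description precedes it below -/
import Mathlib

section
/- Let μ > 0, μ_c ≥ 0, γ real, α₂ = arctan(γ/2), and define W_{αα}(p, α) = (μ − μ_c)(cos α · p − 2 sin α)² + μ_c(sin α · p + 2 cos α)² − μ(sin α · p − 4 sin²(α/2))(sin α · p + 2 cos α). Then W_{αα}(γ, α₂) = √(γ² + 4)·(2μ + (μ_c − μ)·√(γ² + 4)). -/
open Real

/-
With α₂ = arctan(γ/2) and r = √(γ² + 4) one has cos α₂ = 2/r and sin α₂ = γ/r, so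
cos α₂ · γ − 2 sin α₂ = 0 and sin α₂ · γ + 2 cos α₂ = r; moreover 4 sin²(α₂/2) = 2 − 2 cos α₂,
so sin α₂ · γ − 4 sin²(α₂/2) = r − 2. Substituting these three values, W_{αα} becomes
μ_c r² − μ (r − 2) r = r (2μ + (μ_c − μ) r).
-/

namespace Real

lemma sqrt_one_add_div_sq {a b : ℝ} (hb : 0 < b) :
    √(1 + (a / b) ^ 2) = √(a ^ 2 + b ^ 2) / b := by
  rw [eq_div_iff hb.ne', ← sqrt_sq hb.le, ← sqrt_mul (by positivity), sqrt_sq hb.le]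
  congr 1
  field_simp
  ring

lemma cos_arctan_div (a : ℝ) {b : ℝ} (hb : 0 < b) :
    cos (arctan (a / b)) = b / √(a ^ 2 + b ^ 2) := by
  rw [cos_arctan, sqrt_one_add_div_sq hb, one_div_div]

lemma sin_arctan_div (a : ℝ) {b : ℝ} (hb : 0 < b) :
    sin (arctan (a / b)) = a / √(a ^ 2 + b ^ 2) := by
  have : 0 < √(a ^ 2 + b ^ 2) := sqrt_pos.mpr (by positivity)
  rw [sin_arctan, sqrt_one_add_div_sq hb]
  field_simp

lemma cos_arctan_div_mul_sub_mul_sin (a : ℝ) {b : ℝ} (hb : 0 < b) :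
    cos (arctan (a / b)) * a - b * sin (arctan (a / b)) = 0 := by
  rw [cos_arctan_div a hb, sin_arctan_div a hb]
  ring

lemma sin_arctan_div_mul_add_mul_cos (a : ℝ) {b : ℝ} (hb : 0 < b) :
    sin (arctan (a / b)) * a + b * cos (arctan (a / b)) = √(a ^ 2 + b ^ 2) := by
  have hr : 0 < √(a ^ 2 + b ^ 2) := sqrt_pos.mpr (by positivity)
  rw [cos_arctan_div a hb, sin_arctan_div a hb]
  field_simp
  rw [sq_sqrt (by positivity)]

lemma four_mul_sin_half_sq (x : ℝ) : 4 * sin (x / 2) ^ 2 = 2 - 2 * cos x := by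
  rw [sin_sq_eq_half_sub, mul_div_cancel₀ x two_ne_zero]
  ring

end Real

theorem stmt_8_general (μ μc γ : ℝ)
    (Waa : ℝ → ℝ → ℝ)
    (hW : ∀ p α, Waa p α =
      (μ - μc) * (cos α * p - 2 * sin α)^2 + μc * (sin α * p + 2 * cos α)^2
        - μ * (sin α * p - 4 * sin (α/2) ^ 2) * (sin α * p + 2 * cos α)) :
    Waa γ (arctan (γ/2))
      = Real.sqrt (γ^2 + 4) * (2 * μ + (μc - μ) * Real.sqrt (γ^2 + 4)) := by
  have hr : √(γ ^ 2 + 2 ^ 2) = √(γ ^ 2 + 4) := by norm_num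
  have hcos := cos_arctan_div_mul_sub_mul_sin γ two_pos
  have hsin := sin_arctan_div_mul_add_mul_cos γ two_pos
  rw [hr] at hsin
  have hhalf : sin (arctan (γ / 2)) * γ - 4 * sin (arctan (γ / 2) / 2) ^ 2
      = √(γ ^ 2 + 4) - 2 := by
    rw [four_mul_sin_half_sq]
    linarith
  rw [hW, hcos, hsin, hhalf]
  ring

theorem stmt_8 (μ μc γ : ℝ) (hμ : 0 < μ) (hμc : 0 ≤ μc)
    (Waa : ℝ → ℝ → ℝ)
    (hW : ∀ p α, Waa p α =
      (μ - μc) * (cos α * p - 2 * sin α)^2 + μc * (sin α * p + 2 * cos α)^2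
        - μ * (sin α * p - 4 * sin (α/2) ^ 2) * (sin α * p + 2 * cos α)) :
    Waa γ (arctan (γ/2))
      = Real.sqrt (γ^2 + 4) * (2 * μ + (μc - μ) * Real.sqrt (γ^2 + 4)) :=
  stmt_8_general μ μc γ Waa hW
end

section
/- Let 0 < μ_c < μ and γ = 2√(μ_c(2μ − μ_c))/(μ − μ_c), α₂ = arctan(γ/2), and f as above. Then f'(α₂) = 0, f''(α₂) = 0, f'''(α₂) = 0, and f⁽⁴⁾(α₂) = 12μ²/(μ − μ_c) > 0. -/
/-!
Completing the square in `(cos a, sin a)` gives, for every `γ`,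
`f a = E₀ + 2/(μ - μc) * (μ - (μ - μc) (cos a + (γ/2) sin a))²`.
Since `cos a + t sin a = √(1 + t²) cos (a - arctan t)`, and the critical choice of `γ` is exactly
`(μ - μc) √(1 + γ²/4) = μ`, this reads `f a = E₀ + 2μ²/(μ - μc) * (1 - cos (a - α₂))²`.
The derivatives of `(1 - cos u)² = 3/2 - 2 cos u + cos (2u)/2` at `0` are `0, 0, 0, 6`.
-/

open Real

noncomputable def energy (μ μc γ a : ℝ) : ℝ :=
  (μ/2) * γ^2 + (μ/2) * (γ * sin a - 4 * sin (a/2) ^ 2)^2 + (μc/2) * (γ * cos a - 2 * sin a)^2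

theorem energy_eq_add_sq (μ μc γ a : ℝ) (h : μ - μc ≠ 0) :
    energy μ μc γ a
      = (μ + μc) * γ ^ 2 / 2 + 2 * (μ + μc) - 2 * μ ^ 2 / (μ - μc)
        + 2 / (μ - μc) * (μ - (μ - μc) * (cos a + γ / 2 * sin a)) ^ 2 := by
  have hhalf : 4 * sin (a / 2) ^ 2 = 2 - 2 * cos a := by
    rw [sin_sq_eq_half_sub, show 2 * (a / 2) = a by ring]
    ring
  rw [energy, hhalf]
  field_simp
  linear_combination μc * (μ - μc) * (4 + γ ^ 2) * sin_sq_add_cos_sq a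

theorem sqrt_one_add_sq_mul_cos_sub_arctan (t a : ℝ) :
    √(1 + t ^ 2) * cos (a - arctan t) = cos a + t * sin a := by
  have hpos : 0 < √(1 + t ^ 2) := by positivity
  rw [cos_sub, cos_arctan, sin_arctan]
  field_simp

theorem iteratedDeriv_one_sub_cos_sq {n : ℕ} (hn : 0 < n) (u : ℝ) :
    iteratedDeriv n (fun u => (1 - cos u) ^ 2) u
      = 2 ^ n / 2 * iteratedDeriv n cos (2 * u) - 2 * iteratedDeriv n cos u := by
  have h : (fun u => (1 - cos u) ^ 2) = fun u => 3 / 2 + (cos (2 * u) / 2 - 2 * cos u) := by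
    funext u
    rw [cos_two_mul]
    ring
  rw [h, iteratedDeriv_const_add hn, iteratedDeriv_fun_sub (by fun_prop) (by fun_prop),
    iteratedDeriv_div_const, iteratedDeriv_const_mul_field,
    iteratedDeriv_comp_const_mul contDiff_cos]
  ring

theorem iteratedDeriv_one_sub_cos_sq_zero :
    iteratedDeriv 1 (fun u => (1 - cos u) ^ 2) 0 = 0 ∧
    iteratedDeriv 2 (fun u => (1 - cos u) ^ 2) 0 = 0 ∧
    iteratedDeriv 3 (fun u => (1 - cos u) ^ 2) 0 = 0 ∧
    iteratedDeriv 4 (fun u => (1 - cos u) ^ 2) 0 = 6 := by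
  refine ⟨?_, ?_, ?_, ?_⟩ <;> rw [iteratedDeriv_one_sub_cos_sq (by norm_num)] <;>
    simp <;> norm_num

theorem iteratedDeriv_const_add_mul_comp_sub {n : ℕ} (hn : 0 < n) (g : ℝ → ℝ) (c k θ : ℝ) :
    iteratedDeriv n (fun a => c + k * g (a - θ)) θ = k * iteratedDeriv n g 0 := by
  rw [iteratedDeriv_const_add hn, iteratedDeriv_const_mul_field, iteratedDeriv_comp_sub_const]
  simp only [sub_self]

theorem stmt_14 (μ μc : ℝ) (h1 : 0 < μc) (h2 : μc < μ)
    (γ : ℝ) (hγ : γ = 2 * Real.sqrt (μc * (2 * μ - μc)) / (μ - μc))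
    (f : ℝ → ℝ)
    (hf : ∀ a, f a = (μ/2) * γ^2 + (μ/2) * (γ * sin a - 4 * sin (a/2) ^ 2)^2
          + (μc/2) * (γ * cos a - 2 * sin a)^2) :
    iteratedDeriv 1 f (arctan (γ/2)) = 0 ∧
    iteratedDeriv 2 f (arctan (γ/2)) = 0 ∧
    iteratedDeriv 3 f (arctan (γ/2)) = 0 ∧
    iteratedDeriv 4 f (arctan (γ/2)) = 12 * μ^2 / (μ - μc) ∧
    0 < 12 * μ^2 / (μ - μc) := by
  have hμμc : 0 < μ - μc := sub_pos.mpr h2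
  have hamp : (μ - μc) * √(1 + (γ / 2) ^ 2) = μ := by
    have hsq : 1 + (γ / 2) ^ 2 = (μ / (μ - μc)) ^ 2 := by
      rw [hγ, div_pow, div_pow, mul_pow, sq_sqrt (by nlinarith)]
      field_simp
      ring
    rw [hsq, sqrt_sq (div_pos (by linarith) hμμc).le]
    field_simp
  have hf_eq : f = fun a => ((μ + μc) * γ ^ 2 / 2 + 2 * (μ + μc) - 2 * μ ^ 2 / (μ - μc))
      + 2 * μ ^ 2 / (μ - μc) * (1 - cos (a - arctan (γ / 2))) ^ 2 := by
    funext a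
    rw [hf, ← energy, energy_eq_add_sq μ μc γ a hμμc.ne', ← sqrt_one_add_sq_mul_cos_sub_arctan,
      ← mul_assoc, hamp]
    field_simp
  have hderiv : ∀ n, 0 < n → iteratedDeriv n f (arctan (γ / 2))
      = 2 * μ ^ 2 / (μ - μc) * iteratedDeriv n (fun u => (1 - cos u) ^ 2) 0 := fun n hn => by
    rw [hf_eq, iteratedDeriv_const_add_mul_comp_sub hn (fun u => (1 - cos u) ^ 2)]
  obtain ⟨d1, d2, d3, d4⟩ := iteratedDeriv_one_sub_cos_sq_zero
  rw [hderiv 1 (by norm_num), hderiv 2 (by norm_num), hderiv 3 (by norm_num),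
    hderiv 4 (by norm_num), d1, d2, d3, d4]
  exact ⟨mul_zero _, mul_zero _, mul_zero _, by ring, div_pos (by nlinarith) hμμc⟩
end

section
/- Let μ > 0, μ_c ≥ 0 with μ ≠ μ_c, and suppose α, u' satisfy u' = 2 tan α (Case 1). If moreover the balance-of-forces relation ((μ_c − μ)(sin α cos α · u' + cos²α − sin²α) + μ cos α)·α' = (2μ + (μ_c − μ)cos²α)·α'/cos²α holds pointwise (with cos α ≠ 0), then μ cos³α·α' = 2μ·α', hence α' = 0. -/
/-!
With `u' = 2 tan α` the bracket `sin α cos α · u' + cos²α − sin²α` equals `sin²α + cos²α = 1`, so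
the balance law collapses to `μ cos α · α' = 2μ α' / cos²α`, i.e. `μ cos³α · α' = 2μ α'`.
Since `cos³α ≤ 1 < 2`, this forces `α' = 0`.
-/

open Real

theorem sin_mul_cos_mul_two_tan_add_cos_sq_sub_sin_sq {a : ℝ} (hcos : cos a ≠ 0) :
    sin a * cos a * (2 * tan a) + cos a ^ 2 - sin a ^ 2 = 1 := by
  rw [tan_eq_sin_div_cos]
  field_simp
  linear_combination sin_sq_add_cos_sq a

theorem cos_pow_three_le_one (a : ℝ) : cos a ^ 3 ≤ 1 :=
  (le_abs_self _).trans <| by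
    rw [abs_pow]
    exact pow_le_one₀ (abs_nonneg _) (abs_cos_le_one a)

theorem eq_zero_of_mul_eq_two_mul {c x : ℝ} (hc : c ≤ 1) (h : c * x = 2 * x) : x = 0 := by
  have : (2 - c) * x = 0 := by linear_combination -h
  exact (mul_eq_zero.mp this).resolve_left (by linarith)

theorem stmt_19_general (μ μc : ℝ) (hμ : 0 < μ)
    (a p a' : ℝ) (hcos : cos a ≠ 0) (hp : p = 2 * tan a)
    (hbal : ((μc - μ) * (sin a * cos a * p + cos a ^ 2 - sin a ^ 2) + μ * cos a) * a'
        = (2 * μ + (μc - μ) * cos a ^ 2) * a' / cos a ^ 2) :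
    μ * cos a ^ 3 * a' = 2 * μ * a' ∧ a' = 0 := by
  rw [hp, sin_mul_cos_mul_two_tan_add_cos_sq_sub_sin_sq hcos, eq_div_iff (pow_ne_zero 2 hcos)]
    at hbal
  have key : μ * cos a ^ 3 * a' = 2 * μ * a' := by linear_combination hbal
  have reduced : cos a ^ 3 * a' = 2 * a' := mul_left_cancel₀ hμ.ne' (by linear_combination key)
  exact ⟨key, eq_zero_of_mul_eq_two_mul (cos_pow_three_le_one a) reduced⟩

theorem stmt_19 (μ μc : ℝ) (hμ : 0 < μ) (hμc : 0 ≤ μc) (hne : μ ≠ μc)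
    (a p a' : ℝ) (hcos : cos a ≠ 0) (hp : p = 2 * tan a)
    (hbal : ((μc - μ) * (sin a * cos a * p + cos a ^ 2 - sin a ^ 2) + μ * cos a) * a'
        = (2 * μ + (μc - μ) * cos a ^ 2) * a' / cos a ^ 2) :
    μ * cos a ^ 3 * a' = 2 * μ * a' ∧ a' = 0 :=
  stmt_19_general μ μc hμ a p a' hcos hp hbal
end
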